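/- arXiv:1702.02528 — 4 statements merged into one kernel-verified Lean document; each statement's English description precedes it below -/
import Mathlib

section
/- Let Ψ be a λ-Lipschitz operator (λ < 1) on the complete lattice of 1-bounded pseudometrics on M with respect to the supremum norm, i.e., ‖Ψ(d') − Ψ(d)‖ ≤ λ‖d' − d‖. Then Ψ has a unique fixed point, and this fixed point equals inf_{n∈ℕ} Ψⁿ(𝟏), where 𝟏 is the pseudometric assigning distance 1 to all distinct pairs and 0 on the diagonal. -/
def IsPseudo1 {A : Type*} (d : A → A → ℝ) : Prop :=
  (∀ x, d x x = 0) ∧ (∀ x y, d x y = d y x) ∧ (∀ x y z, d x z ≤ d x y + d y z) ∧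
  (∀ x y, 0 ≤ d x y) ∧ (∀ x y, d x y ≤ 1)

open Classical in
theorem lipschitz_unique_fixed_point {M : Type*} (lam : ℝ) (hlam0 : 0 < lam) (hlam1 : lam < 1)
    (Ψ : (M → M → ℝ) → (M → M → ℝ))
    (hmap : ∀ d, IsPseudo1 d → IsPseudo1 (Ψ d))
    (hmono : ∀ d d', IsPseudo1 d → IsPseudo1 d' →
      (∀ x y, d x y ≤ d' x y) → ∀ x y, Ψ d x y ≤ Ψ d' x y)
    (hlip : ∀ d d', IsPseudo1 d → IsPseudo1 d' → ∀ ε : ℝ,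
      (∀ x y, |d' x y - d x y| ≤ ε) → ∀ x y, |Ψ d' x y - Ψ d x y| ≤ lam * ε) :
    let one : M → M → ℝ := fun x y => if x = y then 0 else 1
    let F : M → M → ℝ := fun x y => ⨅ n : ℕ, Ψ^[n] one x y
    IsPseudo1 F ∧ Ψ F = F ∧ ∀ d, IsPseudo1 d → Ψ d = d → d = F := by
  intro one F
  set f : ℕ → M → M → ℝ := fun n => Ψ^[n] one with hf
  have hsub : 0 < 1 - lam := by linarith
  have hone : IsPseudo1 one := by
    refine ⟨fun x => if_pos rfl, fun x y => ?_, fun x y z => ?_, fun x y => ?_, fun x y => ?_⟩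
    · simp only [one]; by_cases h : x = y <;> simp [h, eq_comm]
    · simp only [one]
      by_cases hxz : x = z <;> by_cases hxy : x = y <;> by_cases hyz : y = z <;>
        simp_all <;> norm_num
    · simp only [one]; split <;> norm_num
    · simp only [one]; split <;> norm_num
  have hfn : ∀ n, IsPseudo1 (f n) := by
    intro n; induction n with
    | zero => exact hone
    | succ n ih => simpa [hf, Function.iterate_succ_apply'] using hmap _ ih
  have hsucc : ∀ n, f (n + 1) = Ψ (f n) := fun n => Function.iterate_succ_apply' Ψ n one
  have hanti1 : ∀ n x y, f (n + 1) x y ≤ f n x y := by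
    intro n
    induction n with
    | zero =>
      intro x y
      rw [hsucc]
      simp only [hf, Function.iterate_zero, id_eq, one]
      by_cases h : x = y
      · subst h; rw [(hmap one hone).1]; simp
      · simp only [h, if_neg]
        simpa using (hmap one hone).2.2.2.2 x y
    | succ n ih =>
      intro x y
      have h := hmono _ _ (hfn (n+1)) (hfn n) ih x y
      rw [← hsucc (n+1), ← hsucc n] at h
      exact h
  have hanti : ∀ n m, n ≤ m → ∀ x y, f m x y ≤ f n x y := by
    intro n m hnm
    induction m, hnm using Nat.le_induction with
    | base => intro x y; exact le_refl _
    | succ m hm ih => intro x y; exact (hanti1 m x y).trans (ih x y)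
  have hbdd : ∀ x y, BddBelow (Set.range fun n => f n x y) := by
    intro x y
    exact ⟨0, fun r ⟨n, hn⟩ => hn ▸ (hfn n).2.2.2.1 x y⟩
  have hFle : ∀ n x y, F x y ≤ f n x y := fun n x y => ciInf_le (hbdd x y) n
  have habs : ∀ n x y, |f (n + 1) x y - f n x y| ≤ lam ^ n := by
    intro n
    induction n with
    | zero =>
      intro x y
      rw [hsucc]
      simp only [hf, Function.iterate_zero, id_eq, pow_zero]
      rw [abs_le]
      have h1 := (hmap one hone).2.2.2.1 x y
      have h2 := (hmap one hone).2.2.2.2 x y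
      simp only [one] at h1 h2
      have h5 : (0:ℝ) ≤ (if x = y then (0:ℝ) else 1) := by split <;> norm_num
      have h6 : (if x = y then (0:ℝ) else 1) ≤ 1 := by split <;> norm_num
      constructor <;> linarith
    | succ n ih =>
      intro x y
      have h := hlip (f n) (f (n+1)) (hfn n) (hfn (n+1)) (lam ^ n) ih x y
      rw [← hsucc (n+1), ← hsucc n] at h
      rw [pow_succ]
      linarith
  have hkey : ∀ n m, n ≤ m → ∀ x y, f n x y - f m x y ≤ lam ^ n / (1 - lam) := by
    intro n m hnm
    have : ∀ x y, f n x y - f m x y ≤ (lam ^ n - lam ^ m) / (1 - lam) := by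
      induction m, hnm using Nat.le_induction with
      | base => intro x y; simp
      | succ m hm ih =>
        intro x y
        have h1 := ih x y
        have h2 : f m x y - f (m+1) x y ≤ lam ^ m := by
          have := habs m x y
          rw [abs_le] at this; linarith
        have : f n x y - f (m+1) x y ≤ (lam ^ n - lam ^ m) / (1 - lam) + lam ^ m := by linarith
        calc f n x y - f (m+1) x y ≤ (lam ^ n - lam ^ m) / (1 - lam) + lam ^ m := this
          _ = (lam ^ n - lam ^ (m+1)) / (1 - lam) := by field_simp; ring
    intro x y
    refine (this x y).trans ?_
    have hm : (0:ℝ) ≤ lam ^ m := pow_nonneg hlam0.le m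
    rw [div_eq_mul_inv, div_eq_mul_inv]
    exact mul_le_mul_of_nonneg_right (by linarith) (inv_nonneg.mpr hsub.le)
  have hclose : ∀ n x y, f n x y - F x y ≤ lam ^ n / (1 - lam) := by
    intro n x y
    have : f n x y - lam ^ n / (1 - lam) ≤ F x y := by
      apply le_ciInf
      intro m
      rcases le_total n m with h | h
      · have := hkey n m h x y; linarith
      · have h1 := hanti m n h x y
        have : (0:ℝ) ≤ lam ^ n / (1 - lam) := div_nonneg (pow_nonneg hlam0.le n) hsub.le
        linarith
    linarith
  have hlampow : Filter.Tendsto (fun n : ℕ => lam ^ n) Filter.atTop (nhds 0) :=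
    tendsto_pow_atTop_nhds_zero_of_lt_one hlam0.le hlam1
  have habs_zero : ∀ c : ℝ, (∀ n : ℕ, |c| ≤ lam ^ n * (1 + 2 / (1 - lam))) → c = 0 := by
    intro c hc
    have : Filter.Tendsto (fun n : ℕ => lam ^ n * (1 + 2 / (1 - lam))) Filter.atTop (nhds 0) := by
      simpa using hlampow.mul_const (1 + 2 / (1 - lam))
    have h0 : |c| ≤ 0 := le_of_tendsto_of_tendsto' tendsto_const_nhds this hc
    exact abs_eq_zero.mp (le_antisymm h0 (abs_nonneg c))
  have hFpseudo : IsPseudo1 F := by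
    refine ⟨?_, ?_, ?_, ?_, ?_⟩
    · intro x
      have : (fun n : ℕ => f n x x) = fun _ => (0:ℝ) := funext fun n => (hfn n).1 x
      simp only [F, hf] at *
      rw [show (fun n : ℕ => Ψ^[n] one x x) = fun _ => (0:ℝ) from this]
      exact ciInf_const
    · intro x y
      simp only [F]
      exact congrArg _ (funext fun n => (hfn n).2.1 x y)
    · intro x y z
      refine le_of_forall_pos_le_add fun ε hε => ?_
      obtain ⟨n, hn⟩ := exists_pow_lt_of_lt_one (mul_pos (half_pos hε) hsub) hlam1
      have hn' : lam ^ n / (1 - lam) < ε / 2 := (div_lt_iff₀ hsub).mpr hn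
      have h1 := hclose n x y
      have h2 := hclose n y z
      have h3 := (hfn n).2.2.1 x y z
      have h4 := hFle n x z
      linarith
    · intro x y
      exact le_ciInf fun n => (hfn n).2.2.2.1 x y
    · intro x y
      exact (hFle 0 x y).trans (hone.2.2.2.2 x y)
  have hfix : Ψ F = F := by
    funext x y
    have h0 : Ψ F x y - F x y = 0 := by
      apply habs_zero
      intro n
      have hc : ∀ a b, |F a b - f n a b| ≤ lam ^ n / (1 - lam) := by
        intro a b
        rw [abs_le]
        have h1 := hclose n a b
        have h2 := hFle n a b
        have h3 : (0:ℝ) ≤ lam ^ n / (1 - lam) := div_nonneg (pow_nonneg hlam0.le n) hsub.le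
        constructor <;> linarith
      have h1 : |Ψ F x y - f (n+1) x y| ≤ lam * (lam ^ n / (1 - lam)) := by
        rw [hsucc]
        exact hlip (f n) F (hfn n) hFpseudo _ hc x y
      have h2 : |f (n+1) x y - F x y| ≤ lam ^ n / (1 - lam) := by
        rw [abs_le]
        have ha := hclose (n+1) x y
        have hb := hFle (n+1) x y
        have hc : f (n+1) x y - F x y ≤ lam ^ n / (1 - lam) := by
          refine ha.trans ?_
          have hp : lam ^ (n+1) ≤ lam ^ n := by
            rw [pow_succ]
            nlinarith [pow_nonneg hlam0.le n]
          rw [div_eq_mul_inv, div_eq_mul_inv]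
          exact mul_le_mul_of_nonneg_right hp (inv_nonneg.mpr hsub.le)
        constructor <;> linarith
      calc |Ψ F x y - F x y| ≤ |Ψ F x y - f (n+1) x y| + |f (n+1) x y - F x y| :=
            abs_sub_le _ _ _
        _ ≤ lam * (lam ^ n / (1 - lam)) + lam ^ n / (1 - lam) := add_le_add h1 h2
        _ ≤ lam ^ n * (1 + 2 / (1 - lam)) := by
            have h3 : (0:ℝ) ≤ lam ^ n := pow_nonneg hlam0.le n
            have hq : (0:ℝ) ≤ lam ^ n / (1 - lam) := div_nonneg h3 hsub.le
            have h9 : lam ^ n * (1 + 2 / (1 - lam)) = lam ^ n + 2 * (lam ^ n / (1 - lam)) := by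
              field_simp
            have h5 : lam * (lam ^ n / (1 - lam)) ≤ 1 * (lam ^ n / (1 - lam)) :=
              mul_le_mul_of_nonneg_right hlam1.le hq
            rw [h9]
            linarith
    exact sub_eq_zero.mp h0
  refine ⟨hFpseudo, hfix, ?_⟩
  intro d hd hfixd
  have hiterd : ∀ n, Ψ^[n] d = d := by
    intro n; induction n with
    | zero => rfl
    | succ n ih => rw [Function.iterate_succ_apply', ih, hfixd]
  have hdist : ∀ n x y, |d x y - f n x y| ≤ lam ^ n := by
    intro n
    induction n with
    | zero =>
      intro x y
      simp only [hf, Function.iterate_zero, id_eq, pow_zero, one]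
      rw [abs_le]
      have h1 := hd.2.2.2.1 x y
      have h2 := hd.2.2.2.2 x y
      constructor <;> split <;> linarith
    | succ n ih =>
      intro x y
      rw [hsucc, pow_succ, mul_comm (lam ^ n) lam]
      have := hlip (f n) d (hfn n) hd (lam ^ n) ih x y
      rwa [hfixd] at this
  funext x y
  have h0 : d x y - F x y = 0 := by
    apply habs_zero
    intro n
    have h1 := hdist n x y
    have h2 := hclose n x y
    have h3 := hFle n x y
    have h4 : |d x y - F x y| ≤ |d x y - f n x y| + |f n x y - F x y| := abs_sub_le _ _ _
    have h5 : |f n x y - F x y| ≤ lam ^ n / (1 - lam) := by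
      rw [abs_le]; constructor <;> linarith
    have h6 : (0:ℝ) ≤ lam ^ n := pow_nonneg hlam0.le n
    have h10 : (0:ℝ) ≤ lam ^ n / (1 - lam) := div_nonneg h6 hsub.le
    have h9 : lam ^ n * (1 + 2 / (1 - lam)) = lam ^ n + 2 * (lam ^ n / (1 - lam)) := by
      field_simp
    rw [h9]
    linarith
  exact sub_eq_zero.mp h0
end

section
/- In a barycentric algebra, the entropic identity holds: for all elements t, s, t', s' and all e, d ∈ [0,1], (t +_e s) +_d (t' +_e s') = (t +_d t') +_e (s +_d s'). -/
/-! Both sides of the entropic identity reassociate by (SA) to `t +_{de} (·)`, leaving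
`s +_A (t' +_e s') = t' +_B (s +_d s')` with `A = d(1-e)/(1-de)` and `B = e(1-d)/(1-de)`.
These agree by the exchange law `x +_a (y +_b z) = y +_{a'} (x +_{b'} z)`, which is (SC),
then (SA), then (SC) again. The boundary cases `e ∈ {0, 1}` and `d = 1` fall out of (B1). -/

structure Barycentric (α : Type*) where
  op : ℝ → α → α → α
  b1 : ∀ t s, op 1 t s = t
  b2 : ∀ (e : ℝ) (t : α), 0 ≤ e → e ≤ 1 → op e t t = t
  sc : ∀ (e : ℝ) (t s : α), 0 ≤ e → e ≤ 1 → op e t s = op (1 - e) s t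
  sa : ∀ (e e' : ℝ) (t s u : α), 0 ≤ e → e < 1 → 0 ≤ e' → e' < 1 →
    op e' (op e t s) u = op (e * e') t (op ((e' - e * e') / (1 - e * e')) s u)

namespace Barycentric

variable {α : Type*} (B : Barycentric α)

lemma op_zero (x y : α) : B.op 0 x y = y := by
  rw [B.sc 0 x y le_rfl zero_le_one, sub_zero, B.b1]

lemma op_left_comm {a b a' b' : ℝ} (ha0 : 0 < a) (ha1 : a ≤ 1) (hb0 : 0 ≤ b) (hb1 : b < 1)
    (ha' : a' = b * (1 - a)) (hb' : b' * (1 - a') = a) (x y z : α) :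
    B.op a x (B.op b y z) = B.op a' y (B.op b' x z) := by
  have hden : 0 < 1 - b * (1 - a) := by nlinarith
  have hc0 : 0 ≤ (1 - a - b * (1 - a)) / (1 - b * (1 - a)) :=
    div_nonneg (by nlinarith) hden.le
  have hc1 : (1 - a - b * (1 - a)) / (1 - b * (1 - a)) ≤ 1 :=
    (div_le_one hden).2 (by linarith)
  have hb'_eq : b' = 1 - (1 - a - b * (1 - a)) / (1 - b * (1 - a)) := by
    rw [eq_div_of_mul_eq (ha' ▸ hden.ne') hb', ha']
    field_simp
    ring
  rw [B.sc a x _ ha0.le ha1, B.sa b (1 - a) y z x hb0 hb1 (by linarith) (by linarith),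
    B.sc _ z x hc0 hc1, ha', hb'_eq]

end Barycentric

theorem barycentric_entropic {α : Type*} (B : Barycentric α)
    (t s t' s' : α) (e d : ℝ)
    (he0 : 0 ≤ e) (he1 : e ≤ 1) (hd0 : 0 ≤ d) (hd1 : d ≤ 1) :
    B.op d (B.op e t s) (B.op e t' s') = B.op e (B.op d t t') (B.op d s s') := by
  rcases he1.lt_or_eq with he1 | rfl
  swap
  · simp only [B.b1]
  rcases hd1.lt_or_eq with hd1 | rfl
  swap
  · simp only [B.b1]
  rcases he0.lt_or_eq with he0 | rfl
  swap
  · simp only [B.op_zero]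
  have hed : 0 < 1 - d * e := by nlinarith
  have hB0 : 0 < (e - d * e) / (1 - d * e) := div_pos (by nlinarith) hed
  have hB1 : (e - d * e) / (1 - d * e) ≤ 1 := (div_le_one hed).2 (by linarith)
  have hA : (d - d * e) / (1 - d * e) = d * (1 - (e - d * e) / (1 - d * e)) := by
    rw [one_sub_div hed.ne', mul_div_assoc']
    ring
  have he : e * (1 - (d - d * e) / (1 - d * e)) = (e - d * e) / (1 - d * e) := by
    rw [one_sub_div hed.ne', mul_div_assoc']
    ring
  rw [B.sa e d t s _ he0.le he1 hd0 hd1, B.sa d e t t' _ hd0 hd1 he0.le he1, mul_comm e d,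
    B.op_left_comm hB0 hB1 hd0 hd1 hA he]
end

section
/- In a barycentric algebra, the distributivity law holds: for all elements u, t', s' and all e, d ∈ [0,1], u +_d (t' +_e s') = (u +_d t') +_e (u +_d s'). -/
theorem barycentric_distributivity {α : Type*} (B : Barycentric α)
    (u t' s' : α) (e d : ℝ)
    (he0 : 0 ≤ e) (he1 : e ≤ 1) (hd0 : 0 ≤ d) (hd1 : d ≤ 1) :
    B.op d u (B.op e t' s') = B.op e (B.op d u t') (B.op d u s') := by
  have op0 : ∀ x y : α, B.op 0 x y = y := by
    intro x y
    rw [B.sc 0 x y le_rfl zero_le_one]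
    simpa using B.b1 y x
  rcases eq_or_lt_of_le he0 with he0' | he0'
  · rw [← he0', op0, op0]
  rcases eq_or_lt_of_le he1 with he1' | he1'
  · rw [he1', B.b1, B.b1]
  rcases eq_or_lt_of_le hd0 with hd0' | hd0'
  · rw [← hd0', op0, op0, op0]
  set c := 1 - d with hc
  have hc0 : 0 ≤ c := by simp [hc]; linarith
  have hc1 : c < 1 := by simp [hc]; linarith
  have hce : c * e < 1 := by nlinarith
  have hce' : 0 < 1 - c * e := by linarith
  set g := (e - c * e) / (1 - c * e) with hg
  have hg0 : 0 < g := div_pos (by nlinarith) hce'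
  have hg1 : g ≤ 1 := by rw [div_le_one hce']; nlinarith
  -- flip the three outermost d-operations
  have hflip : ∀ x : α, B.op d u x = B.op c x u := by
    intro x
    rw [B.sc d u x hd0 hd1]
  rw [hflip, hflip, hflip]
  -- expand LHS
  rw [B.sa e c t' s' u he0 he1' hc0 hc1]
  -- expand RHS
  rw [B.sa c e t' u (B.op c s' u) hc0 hc1 he0 he1']
  -- simplify the inner term on the RHS
  have inner : B.op g u (B.op c s' u) = B.op ((c - e * c) / (1 - e * c)) s' u := by
    rw [B.sc g u _ (le_of_lt hg0) hg1]
    rw [B.sa c (1 - g) s' u u hc0 hc1 (by linarith) (by linarith)]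
    have hcg : c * (1 - g) < 1 := by nlinarith [hg0, hc1, hc0]
    have hnum : 0 ≤ (1 - g) - c * (1 - g) := by nlinarith
    have h0 : 0 ≤ ((1 - g) - c * (1 - g)) / (1 - c * (1 - g)) :=
      div_nonneg hnum (by linarith)
    have h1 : ((1 - g) - c * (1 - g)) / (1 - c * (1 - g)) ≤ 1 := by
      rw [div_le_one (by linarith)]; nlinarith
    rw [B.b2 _ u h0 h1]
    have hne : (1 - c * e) ≠ 0 := ne_of_gt hce'
    have hne' : (1 - e * c) ≠ 0 := by rw [mul_comm]; exact hne
    congr 1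
    rw [hg]
    field_simp
    ring
  rw [inner]
  congr 1
  ring
end

section
/- Kantorovich decomposition: let μ, ν be probability distributions on a finite set A with 1-bounded pseudometric d, t₁ ∈ supp(μ) with μ(t₁) ∈ (0,1), and let ω be an optimal coupling for K_d(μ,ν). With μ₁ = δ_{t₁}, μ₂(x) = μ(x)/(1−μ(t₁)) for x ≠ t₁ (and 0 at t₁), ν₁(y) = ω(t₁,y)/μ(t₁), ν₂(y) = (ν(y) − ω(t₁,y))/(1−μ(t₁)), it holds that K_d(μ,ν) = μ(t₁)·K_d(μ₁,ν₁) + (1−μ(t₁))·K_d(μ₂,ν₂). -/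
open scoped BigOperators

def IsPMF {A : Type*} [Fintype A] (μ : A → ℝ) : Prop :=
  (∀ x, 0 ≤ μ x) ∧ ∑ x, μ x = 1

def IsCoupling {A : Type*} [Fintype A] (μ ν : A → ℝ) (ω : A × A → ℝ) : Prop :=
  IsPMF ω ∧ (∀ x, ∑ y, ω (x, y) = μ x) ∧ (∀ y, ∑ x, ω (x, y) = ν y)

noncomputable def kant {A : Type*} [Fintype A] (d : A → A → ℝ) (μ ν : A → ℝ) : ℝ :=
  sInf {r | ∃ ω, IsCoupling μ ν ω ∧ r = ∑ p : A × A, d p.1 p.2 * ω p}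

/-!
Restricting `ω` to the row `t₁` and to the remaining rows and renormalising gives couplings
`ω₁` of `(μ₁, ν₁)` and `ω₂` of `(μ₂, ν₂)` with `ω = μ(t₁) ω₁ + (1 - μ(t₁)) ω₂`; since the transport
cost is linear in the coupling and `ω` is optimal, this gives `≥`. Conversely, the same mixture of
arbitrary couplings of the two pairs is a coupling of `(μ, ν)`, so `K_d` is convex along mixtures,
which gives `≤`.
-/

open Finset
open scoped Pointwise

def transportCost {A : Type*} [Fintype A] (d : A → A → ℝ) (ω : A × A → ℝ) : ℝ :=
  ∑ p : A × A, d p.1 p.2 * ω p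

section Couplings

variable {A : Type*} [Fintype A] {μ ν μ' ν' : A → ℝ} {ω ω' : A × A → ℝ}

theorem IsCoupling.sum_fst_eq_one (hω : IsCoupling μ ν ω) : ∑ x, μ x = 1 := by
  simp only [← hω.2.1, ← Fintype.sum_prod_type', hω.1.2]

theorem isCoupling_of_marginals (hnn : ∀ p, 0 ≤ ω p) (hrow : ∀ x, ∑ y, ω (x, y) = μ x)
    (hcol : ∀ y, ∑ x, ω (x, y) = ν y) (hμ : ∑ x, μ x = 1) : IsCoupling μ ν ω :=
  ⟨⟨hnn, by rw [Fintype.sum_prod_type]; simp only [hrow, hμ]⟩, hrow, hcol⟩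

theorem IsCoupling.marginals_unique (hω : IsCoupling μ ν ω) (hω' : IsCoupling μ' ν' ω) :
    μ = μ' ∧ ν = ν' :=
  ⟨funext fun x => (hω.2.1 x).symm.trans (hω'.2.1 x),
    funext fun y => (hω.2.2 y).symm.trans (hω'.2.2 y)⟩

theorem IsCoupling.mix (hω : IsCoupling μ ν ω) (hω' : IsCoupling μ' ν' ω') {a : ℝ}
    (ha₀ : 0 ≤ a) (ha₁ : a ≤ 1) :
    IsCoupling (fun x => a * μ x + (1 - a) * μ' x) (fun y => a * ν y + (1 - a) * ν' y)
      (fun p => a * ω p + (1 - a) * ω' p) := by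
  refine isCoupling_of_marginals
    (fun p => add_nonneg (mul_nonneg ha₀ (hω.1.1 p)) (mul_nonneg (by linarith) (hω'.1.1 p)))
    (fun x => ?_) (fun y => ?_) ?_
  · simp only [sum_add_distrib, ← mul_sum, hω.2.1 x, hω'.2.1 x]
  · simp only [sum_add_distrib, ← mul_sum, hω.2.2 y, hω'.2.2 y]
  · simp only [sum_add_distrib, ← mul_sum, hω.sum_fst_eq_one, hω'.sum_fst_eq_one]
    ring

variable [DecidableEq A]

theorem IsCoupling.condFst (hω : IsCoupling μ ν ω) (S : Finset A) (hS : 0 < ∑ x ∈ S, μ x) :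
    IsCoupling (fun x => if x ∈ S then μ x / ∑ x ∈ S, μ x else 0)
      (fun y => (∑ x ∈ S, ω (x, y)) / ∑ x ∈ S, μ x)
      (fun p => if p.1 ∈ S then ω p / ∑ x ∈ S, μ x else 0) := by
  refine isCoupling_of_marginals (fun p => ?_) (fun x => ?_) (fun y => ?_) ?_
  · split_ifs
    exacts [div_nonneg (hω.1.1 p) hS.le, le_rfl]
  · split_ifs
    · rw [← sum_div, hω.2.1 x]
    · exact sum_const_zero
  · rw [sum_ite_mem, univ_inter, sum_div]
  · rw [sum_ite_mem, univ_inter, ← sum_div, div_self hS.ne']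

theorem IsCoupling.condFst_singleton (hω : IsCoupling μ ν ω) {t : A} (ht : 0 < μ t) :
    IsCoupling (fun x => if x = t then 1 else 0) (fun y => ω (t, y) / μ t)
      (fun p => if p.1 = t then ω p / μ t else 0) := by
  convert hω.condFst {t} (by simpa using ht) using 1 <;> funext <;>
    simp only [mem_singleton, sum_singleton]
  split_ifs with h
  · rw [h, div_self ht.ne']
  · rfl

theorem IsCoupling.condFst_compl_singleton (hω : IsCoupling μ ν ω) {t : A} (ht : μ t < 1) :
    IsCoupling (fun x => if x = t then 0 else μ x / (1 - μ t))
      (fun y => (ν y - ω (t, y)) / (1 - μ t))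
      (fun p => if p.1 = t then 0 else ω p / (1 - μ t)) := by
  have hcompl (f : A → ℝ) : ∑ x ∈ {t}ᶜ, f x = ∑ x, f x - f t := by
    rw [Fintype.sum_eq_add_sum_compl t f]; ring
  have hmass : ∑ x ∈ {t}ᶜ, μ x = 1 - μ t := by rw [hcompl, hω.sum_fst_eq_one]
  convert hω.condFst {t}ᶜ (by linarith) using 1 <;> funext <;>
    simp only [mem_compl, mem_singleton, hmass, ite_not, hcompl, hω.2.2]

end Couplings

section Kantorovich

variable {A : Type*} [Fintype A] {d : A → A → ℝ}

theorem bddBelow_transportCosts (hd : ∀ x y, 0 ≤ d x y) (μ ν : A → ℝ) :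
    BddBelow {r | ∃ ω, IsCoupling μ ν ω ∧ r = transportCost d ω} :=
  ⟨0, fun _ ⟨_, hω, hr⟩ => hr ▸ sum_nonneg fun p _ => mul_nonneg (hd _ _) (hω.1.1 p)⟩

theorem kant_le_transportCost (hd : ∀ x y, 0 ≤ d x y) {μ ν : A → ℝ} {ω : A × A → ℝ}
    (hω : IsCoupling μ ν ω) : kant d μ ν ≤ transportCost d ω :=
  csInf_le (bddBelow_transportCosts hd μ ν) ⟨ω, hω, rfl⟩

theorem transportCost_mix (d : A → A → ℝ) (ω ω' : A × A → ℝ) (a b : ℝ) :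
    transportCost d (fun p => a * ω p + b * ω' p) =
      a * transportCost d ω + b * transportCost d ω' := by
  simp only [transportCost, mul_sum, ← sum_add_distrib]
  exact sum_congr rfl fun _ _ => by ring

theorem kant_mix_le (hd : ∀ x y, 0 ≤ d x y) {μ ν μ' ν' : A → ℝ} {σ σ' : A × A → ℝ}
    (hσ : IsCoupling μ ν σ) (hσ' : IsCoupling μ' ν' σ') {a : ℝ} (ha₀ : 0 ≤ a) (ha₁ : a ≤ 1) :
    kant d (fun x => a * μ x + (1 - a) * μ' x) (fun y => a * ν y + (1 - a) * ν' y) ≤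
      a * kant d μ ν + (1 - a) * kant d μ' ν' := by
  set C : Set ℝ := {r | ∃ ω, IsCoupling μ ν ω ∧ r = transportCost d ω}
  set C' : Set ℝ := {r | ∃ ω, IsCoupling μ' ν' ω ∧ r = transportCost d ω}
  have hb₀ : 0 ≤ 1 - a := by linarith
  have hne : C.Nonempty := ⟨_, σ, hσ, rfl⟩
  have hne' : C'.Nonempty := ⟨_, σ', hσ', rfl⟩
  calc kant d _ _ ≤ sInf (a • C + (1 - a) • C') := by
        refine le_csInf (hne.smul_set.add hne'.smul_set) ?_
        rintro _ ⟨_, ⟨_, ⟨ω, hω, rfl⟩, rfl⟩, _, ⟨_, ⟨ω', hω', rfl⟩, rfl⟩, rfl⟩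
        exact (kant_le_transportCost hd (hω.mix hω' ha₀ ha₁)).trans_eq (transportCost_mix ..)
    _ = a * kant d μ ν + (1 - a) * kant d μ' ν' := by
        rw [csInf_add hne.smul_set ((bddBelow_transportCosts hd μ ν).smul_of_nonneg ha₀)
          hne'.smul_set ((bddBelow_transportCosts hd μ' ν').smul_of_nonneg hb₀),
          Real.sInf_smul_of_nonneg ha₀, Real.sInf_smul_of_nonneg hb₀, smul_eq_mul, smul_eq_mul]
        rfl

end Kantorovich

theorem kant_decomposition_general {A : Type*} [Fintype A] [DecidableEq A]
    (d : A → A → ℝ) (hd : IsPseudo1 d)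
    (μ ν : A → ℝ) (ω : A × A → ℝ) (t1 : A)
    (hω : IsCoupling μ ν ω)
    (hopt : (∑ p : A × A, d p.1 p.2 * ω p) = kant d μ ν)
    (h0 : 0 < μ t1) (h1 : μ t1 < 1) :
    let μ1 : A → ℝ := fun x => if x = t1 then 1 else 0
    let μ2 : A → ℝ := fun x => if x = t1 then 0 else μ x / (1 - μ t1)
    let ν1 : A → ℝ := fun y => ω (t1, y) / μ t1
    let ν2 : A → ℝ := fun y => (ν y - ω (t1, y)) / (1 - μ t1)
    kant d μ ν = μ t1 * kant d μ1 ν1 + (1 - μ t1) * kant d μ2 ν2 := by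
  intro μ1 μ2 ν1 ν2
  have hd₀ : ∀ x y, 0 ≤ d x y := hd.2.2.2.1
  have hc₁ := hω.condFst_singleton h0
  have hc₂ := hω.condFst_compl_singleton h1
  have hsplit : (fun p => μ t1 * (if p.1 = t1 then ω p / μ t1 else 0) +
      (1 - μ t1) * (if p.1 = t1 then 0 else ω p / (1 - μ t1))) = ω := by
    funext p
    split_ifs
    · field_simp; ring
    · field_simp [(sub_pos.2 h1).ne']; ring
  have hmix := hc₁.mix hc₂ h0.le h1.le
  rw [hsplit] at hmix
  obtain ⟨hμ, hν⟩ := hω.marginals_unique hmix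
  apply le_antisymm
  · conv_lhs => rw [hμ, hν]
    exact kant_mix_le hd₀ hc₁ hc₂ h0.le h1.le
  · rw [← hopt, ← hsplit]
    show _ ≤ transportCost d _
    rw [transportCost_mix]
    exact add_le_add (mul_le_mul_of_nonneg_left (kant_le_transportCost hd₀ hc₁) h0.le)
      (mul_le_mul_of_nonneg_left (kant_le_transportCost hd₀ hc₂) (sub_pos.2 h1).le)

theorem kant_decomposition {A : Type*} [Fintype A] [DecidableEq A]
    (d : A → A → ℝ) (hd : IsPseudo1 d)
    (μ ν : A → ℝ) (ω : A × A → ℝ) (t1 : A)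
    (hμ : IsPMF μ) (hν : IsPMF ν) (hω : IsCoupling μ ν ω)
    (hopt : (∑ p : A × A, d p.1 p.2 * ω p) = kant d μ ν)
    (h0 : 0 < μ t1) (h1 : μ t1 < 1) :
    let μ1 : A → ℝ := fun x => if x = t1 then 1 else 0
    let μ2 : A → ℝ := fun x => if x = t1 then 0 else μ x / (1 - μ t1)
    let ν1 : A → ℝ := fun y => ω (t1, y) / μ t1
    let ν2 : A → ℝ := fun y => (ν y - ω (t1, y)) / (1 - μ t1)
    kant d μ ν = μ t1 * kant d μ1 ν1 + (1 - μ t1) * kant d μ2 ν2 :=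
  kant_decomposition_general d hd μ ν ω t1 hω hopt h0 h1
end
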